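/- arXiv:2310.17433 — 6 statements merged into one kernel-verified Lean document; each statement's English description precedes it below -/
import Mathlib

section
/- Let G be a finite abelian group and X a nonempty finite subset of G. Then one can choose at least |G| / (|X|(|X|-1) + 1) pairwise disjoint translates of X in G. -/
open scoped Pointwise

theorem disjoint_translates (G : Type*) [AddCommGroup G] [Fintype G] [DecidableEq G]
    (X : Finset G) (hX : X.Nonempty) :
    ∃ T : Finset G,
      Fintype.card G / (X.card * (X.card - 1) + 1) ≤ T.card ∧
      ∀ g ∈ T, ∀ h ∈ T, g ≠ h →
        Disjoint (X.image (g + ·)) (X.image (h + ·)) := by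
  classical
  obtain ⟨x0, hx0⟩ := hX
  set m := X.card * (X.card - 1) + 1 with hm
  have h0 : (0 : G) ∈ X - X := Finset.mem_sub.2 ⟨x0, hx0, x0, hx0, sub_self x0⟩
  have hD : (X - X).card ≤ m := by
    have hsub : X - X ⊆ insert (0 : G) (X.offDiag.image fun p => p.1 - p.2) := by
      intro a ha
      rw [Finset.mem_sub] at ha
      obtain ⟨x, hx, y, hy, rfl⟩ := ha
      by_cases hxy : x = y
      · simp [hxy]
      · exact Finset.mem_insert_of_mem
          (Finset.mem_image.2 ⟨(x, y), Finset.mem_offDiag.2 ⟨hx, hy, hxy⟩, rfl⟩)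
    have h1 := Finset.card_le_card hsub
    have h2 := Finset.card_insert_le (0 : G) (X.offDiag.image fun p => p.1 - p.2)
    have h3 := Finset.card_image_le (s := X.offDiag) (f := fun p : G × G => p.1 - p.2)
    have h4 : X.offDiag.card = X.card * X.card - X.card := Finset.offDiag_card X
    have h5 : X.card * (X.card - 1) = X.card * X.card - X.card := by
      rw [Nat.mul_sub, Nat.mul_one]
    omega
  have key : ∀ g h : G, g ∉ (X - X).image (h + ·) →
      Disjoint (X.image (g + ·)) (X.image (h + ·)) := by
    intro g h hg
    rw [Finset.disjoint_left]
    rintro a ha hb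
    obtain ⟨x, hx, rfl⟩ := Finset.mem_image.1 ha
    obtain ⟨y, hy, hxy⟩ := Finset.mem_image.1 hb
    exact hg (Finset.mem_image.2 ⟨y - x, Finset.mem_sub.2 ⟨y, hy, x, hx, rfl⟩, by
      show h + (y - x) = g
      rw [← add_sub_assoc, hxy, add_sub_cancel_right]⟩)
  have main : ∀ n, n ≤ Fintype.card G / m → ∃ T : Finset G, T.card = n ∧
      ∀ g ∈ T, ∀ h ∈ T, g ≠ h → Disjoint (X.image (g + ·)) (X.image (h + ·)) := by
    intro n
    induction n with
    | zero => exact fun _ => ⟨∅, rfl, by simp⟩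
    | succ k ih =>
      intro hk
      obtain ⟨T, hTcard, hTP⟩ := ih (Nat.le_of_succ_le hk)
      set B := T.biUnion fun h => (X - X).image (h + ·) with hB
      have hBcard : B.card < Fintype.card G := by
        have h1 : B.card ≤ ∑ h ∈ T, ((X - X).image (h + ·)).card :=
          Finset.card_biUnion_le
        have h2 : ∑ h ∈ T, ((X - X).image (h + ·)).card ≤ T.card * m := by
          refine (Finset.sum_le_card_nsmul T _ m fun h _ => ?_).trans (by simp [mul_comm])
          exact (Finset.card_image_le).trans hD
        have h3 : (k + 1) * m ≤ Fintype.card G :=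
          le_trans (Nat.mul_le_mul_right m hk) (Nat.div_mul_le_self _ _)
        have hm1 : 1 ≤ m := Nat.le_add_left 1 _
        calc B.card ≤ T.card * m := h1.trans h2
          _ = k * m := by rw [hTcard]
          _ < (k + 1) * m := by nlinarith
          _ ≤ Fintype.card G := h3
      obtain ⟨g, hg⟩ : ∃ g, g ∉ B := by
        by_contra hc
        push_neg at hc
        have : (Finset.univ : Finset G) ⊆ B := fun a _ => hc a
        have := Finset.card_le_card this
        rw [Finset.card_univ] at this
        omega
      have hgT : g ∉ T := fun hgT =>
        hg (Finset.mem_biUnion.2 ⟨g, hgT, Finset.mem_image.2 ⟨0, h0, add_zero g⟩⟩)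
      refine ⟨insert g T, by rw [Finset.card_insert_of_notMem hgT, hTcard], ?_⟩
      intro a ha b hb hab
      rcases Finset.mem_insert.1 ha with rfl | ha' <;>
        rcases Finset.mem_insert.1 hb with rfl | hb'
      · exact absurd rfl hab
      · exact key a b fun hmem => hg (Finset.mem_biUnion.2 ⟨b, hb', hmem⟩)
      · exact (key b a fun hmem => hg (Finset.mem_biUnion.2 ⟨a, ha', hmem⟩)).symm
      · exact hTP a ha' b hb' hab
  obtain ⟨T, hTcard, hTP⟩ := main (Fintype.card G / m) le_rfl
  exact ⟨T, hTcard.ge, hTP⟩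
end

section
/- Let G be a finite abelian group of exponent 2 (i.e., g + g = 0 for all g ∈ G) and X a nonempty finite subset of G. Then one can choose at least |G| / (binom(|X|,2) + 1) pairwise disjoint translates of X in G. -/
theorem disjoint_translates_exponent_two (G : Type*) [AddCommGroup G] [Fintype G]
    [DecidableEq G] (hG : ∀ g : G, g + g = 0) (X : Finset G) (hX : X.Nonempty) :
    ∃ T : Finset G,
      Fintype.card G / (X.card.choose 2 + 1) ≤ T.card ∧
      ∀ g ∈ T, ∀ h ∈ T, g ≠ h →
        Disjoint (X.image (g + ·)) (X.image (h + ·)) := by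
  classical
  have hself : ∀ a : G, -a = a := fun a => neg_eq_of_add_eq_zero_right (hG a)
  set D : Finset G := (X ×ˢ X).image (fun p => p.1 - p.2) with hD
  have hmemD : ∀ a ∈ X, ∀ b ∈ X, a - b ∈ D := by
    intro a ha b hb
    exact Finset.mem_image.2 ⟨(a, b), Finset.mem_product.2 ⟨ha, hb⟩, rfl⟩
  have h0D : (0 : G) ∈ D := by
    obtain ⟨x, hx⟩ := hX
    simpa using hmemD x hx x hx
  -- cardinality bound for D
  have hDcard : D.card ≤ X.card.choose 2 + 1 := by
    have hsub : D ⊆ insert 0 ((X.powersetCard 2).image (fun s => s.sum id)) := by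
      intro d hd
      rw [hD, Finset.mem_image] at hd
      obtain ⟨⟨a, b⟩, hab', rfl⟩ := hd
      obtain ⟨ha, hb⟩ := Finset.mem_product.1 hab'
      by_cases hab : a = b
      · simp [hab]
      · apply Finset.mem_insert_of_mem
        refine Finset.mem_image.2 ⟨{a, b}, ?_, ?_⟩
        · rw [Finset.mem_powersetCard]
          refine ⟨?_, Finset.card_pair hab⟩
          intro x hx
          rcases Finset.mem_insert.1 hx with rfl | hx
          · exact ha
          · rw [Finset.mem_singleton] at hx; subst hx; exact hb
        · rw [Finset.sum_pair hab]
          simp only [id]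
          rw [sub_eq_add_neg, hself b]
    calc D.card ≤ (insert 0 ((X.powersetCard 2).image (fun s => s.sum id))).card :=
          Finset.card_le_card hsub
      _ ≤ ((X.powersetCard 2).image (fun s => s.sum id)).card + 1 :=
          Finset.card_insert_le _ _
      _ ≤ (X.powersetCard 2).card + 1 := Nat.add_le_add_right Finset.card_image_le 1
      _ = X.card.choose 2 + 1 := by rw [Finset.card_powersetCard]
  -- property of candidate sets
  set P : Finset G → Prop := fun T => ∀ g ∈ T, ∀ h ∈ T, g ≠ h → g - h ∉ D with hP
  have hPdec : DecidablePred P := fun _ => Classical.dec _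
  set C : Finset (Finset G) := Finset.univ.filter P with hC
  have hCne : C.Nonempty := ⟨∅, by simp [hC, hP]⟩
  obtain ⟨T, hTC, hTmax⟩ := C.exists_max_image Finset.card hCne
  have hPT : P T := (Finset.mem_filter.1 hTC).2
  -- covering property
  have hcov : ∀ g : G, ∃ t ∈ T, g - t ∈ D := by
    intro g
    by_contra hcon
    push_neg at hcon
    have hgT : g ∉ T := fun hg => (hcon g hg) (by simpa using h0D)
    have hsymm : ∀ a b : G, a - b = b - a := fun a b => by
      rw [sub_eq_add_neg, hself, sub_eq_add_neg, hself, add_comm]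
    have hPins : P (insert g T) := by
      intro a ha b hb hab
      rcases Finset.mem_insert.1 ha with rfl | ha'
      · rcases Finset.mem_insert.1 hb with rfl | hb'
        · exact absurd rfl hab
        · exact hcon b hb'
      · rcases Finset.mem_insert.1 hb with rfl | hb'
        · rw [hsymm]; exact hcon a ha'
        · exact hPT a ha' b hb' hab
    have hle := hTmax (insert g T) (Finset.mem_filter.2 ⟨Finset.mem_univ _, hPins⟩)
    rw [Finset.card_insert_of_notMem hgT] at hle
    omega
  -- counting
  have hcount : Fintype.card G ≤ T.card * D.card := by
    choose t ht hd using hcov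
    have hinj : Set.InjOn (fun g : G => (t g, g - t g)) (Finset.univ : Finset G) := by
      intro a _ b _ hab
      simp only [Prod.mk.injEq] at hab
      have h1 : t a + (a - t a) = t b + (b - t b) := by rw [hab.2, hab.1]
      simpa using h1
    have hmaps : ∀ g ∈ (Finset.univ : Finset G),
        (t g, g - t g) ∈ T ×ˢ D := fun g _ => Finset.mem_product.2 ⟨ht g, hd g⟩
    calc Fintype.card G = (Finset.univ : Finset G).card := (Finset.card_univ).symm
      _ ≤ (T ×ˢ D).card := Finset.card_le_card_of_injOn _ hmaps hinj
      _ = T.card * D.card := Finset.card_product _ _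
  refine ⟨T, ?_, ?_⟩
  · have h1 : Fintype.card G ≤ T.card * (X.card.choose 2 + 1) :=
      hcount.trans (Nat.mul_le_mul_left _ hDcard)
    calc Fintype.card G / (X.card.choose 2 + 1)
        ≤ T.card * (X.card.choose 2 + 1) / (X.card.choose 2 + 1) :=
          Nat.div_le_div_right h1
      _ = T.card := Nat.mul_div_cancel _ (Nat.succ_pos _)
  · intro g hg h hh hgh
    rw [Finset.disjoint_left]
    rintro a ha hb
    obtain ⟨x, hx, rfl⟩ := Finset.mem_image.1 ha
    obtain ⟨y, hy, hxy⟩ := Finset.mem_image.1 hb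
    apply hPT g hg h hh hgh
    have key : g - h = y - x := by
      have h1 : g + x = h + y := hxy.symm
      calc g - h = (g + x) - (h + x) := by abel
        _ = (h + y) - (h + x) := by rw [h1]
        _ = y - x := by abel
    rw [key]
    exact hmemD y hy x hx
end

section
/- Let G be an abelian group, let A = (a_1,...,a_k) be a sequence in G, and suppose B is a sequence in G that is free of signed t-sums for all 1 ≤ t < ℓ where ℓ is the length of B. Then for every subset S of indices of A, there exist at most two subsets T of indices of B such that the combined subsequence A_S together with B_T sums to zero. -/
/-- A sequence `c : Fin m → G` is free of signed `t`-sums if no `t` of its entries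
admit a `±1`-combination summing to zero. -/
def FreeOfSignedSums {G : Type*} [AddCommGroup G] {m : ℕ} (c : Fin m → G) (t : ℕ) : Prop :=
  ¬ ∃ (s : Finset (Fin m)) (ε : Fin m → ℤ), s.card = t ∧
      (∀ i ∈ s, ε i = 1 ∨ ε i = -1) ∧ ∑ i ∈ s, ε i • c i = 0

theorem at_most_two_completions {G : Type*} [AddCommGroup G] {k ℓ : ℕ}
    (A : Fin k → G) (B : Fin ℓ → G)
    (hB : ∀ t, 1 ≤ t → t < ℓ → FreeOfSignedSums B t) :
    ∀ S : Finset (Fin k),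
      {T : Finset (Fin ℓ) | ∑ i ∈ S, A i + ∑ j ∈ T, B j = 0}.ncard ≤ 2 := by
  intro S
  set P : Set (Finset (Fin ℓ)) := {T : Finset (Fin ℓ) | ∑ i ∈ S, A i + ∑ j ∈ T, B j = 0}
  -- key: any two distinct members are complements
  have key : ∀ T₁ ∈ P, ∀ T₂ ∈ P, T₁ ≠ T₂ → T₂ = T₁ᶜ := by
    intro T₁ h1 T₂ h2 hne
    have hsum : ∑ j ∈ T₁, B j = ∑ j ∈ T₂, B j := by
      have := h1.trans h2.symm
      simpa using this
    set D : Finset (Fin ℓ) := symmDiff T₁ T₂ with hD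
    have hDne : D.Nonempty := by
      rw [Finset.nonempty_iff_ne_empty]
      intro h
      exact hne (symmDiff_eq_bot.mp h)
    set ε : Fin ℓ → ℤ := fun j => if j ∈ T₁ then 1 else -1 with hε
    have hzero : ∑ j ∈ D, ε j • B j = 0 := by
      have hdisj : Disjoint (T₁ \ T₂) (T₂ \ T₁) := disjoint_sdiff_sdiff
      have hDeq : D = (T₁ \ T₂) ∪ (T₂ \ T₁) := by
        rw [hD, symmDiff_def, Finset.sup_eq_union]
      rw [hDeq, Finset.sum_union hdisj]
      have e1 : ∑ j ∈ T₁ \ T₂, ε j • B j = ∑ j ∈ T₁ \ T₂, B j := by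
        apply Finset.sum_congr rfl
        intro j hj
        simp [hε, (Finset.mem_sdiff.mp hj).1]
      have e2 : ∑ j ∈ T₂ \ T₁, ε j • B j = -∑ j ∈ T₂ \ T₁, B j := by
        rw [← Finset.sum_neg_distrib]
        apply Finset.sum_congr rfl
        intro j hj
        simp [hε, (Finset.mem_sdiff.mp hj).2]
      rw [e1, e2]
      have s1 : ∑ j ∈ T₁ \ T₂, B j = ∑ j ∈ T₁, B j - ∑ j ∈ T₁ ∩ T₂, B j := by
        rw [eq_sub_iff_add_eq, add_comm]
        exact Finset.sum_inter_add_sum_sdiff T₁ T₂ B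
      have s2 : ∑ j ∈ T₂ \ T₁, B j = ∑ j ∈ T₂, B j - ∑ j ∈ T₁ ∩ T₂, B j := by
        rw [eq_sub_iff_add_eq, add_comm, Finset.inter_comm]
        exact Finset.sum_inter_add_sum_sdiff T₂ T₁ B
      rw [s1, s2, hsum]
      abel
    have hcard : ¬ D.card < ℓ := by
      intro hlt
      exact hB D.card (Finset.Nonempty.card_pos hDne) hlt ⟨D, ε, rfl, by
        intro i _; by_cases h : i ∈ T₁ <;> simp [hε, h], hzero⟩
    have hDuniv : D = Finset.univ := by
      apply Finset.eq_univ_of_card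
      rw [Fintype.card_fin]
      have h2 : D.card ≤ ℓ := le_trans (Finset.card_le_univ D) (by simp)
      omega
    ext j
    have hj : j ∈ D := hDuniv ▸ Finset.mem_univ j
    rw [hD, Finset.mem_symmDiff] at hj
    simp only [Finset.mem_compl]
    tauto
  rcases Set.eq_empty_or_nonempty P with h | ⟨T₀, hT₀⟩
  · simp [h]
  · have hsub : P ⊆ {T₀, T₀ᶜ} := by
      intro T hT
      by_cases h : T = T₀
      · left; exact h
      · right; exact key T₀ hT₀ T hT (fun e => h e.symm)
    calc P.ncard ≤ ({T₀, T₀ᶜ} : Set (Finset (Fin ℓ))).ncard :=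
          Set.ncard_le_ncard hsub (Set.toFinite _)
      _ ≤ 2 := by
          apply le_trans (Set.ncard_insert_le _ _)
          simp
end

section
/- Let u be a nonzero vector in F_2^n and let D = (d_1,...,d_t) be a sequence of vectors in F_2^n whose sum equals t·u (i.e., 0 if t is even, u if t is odd), and such that the partial sums d_1, d_1+d_2, ..., d_1+...+d_{t-1}, 0 are pairwise distinct modulo the subspace spanned by u. Then in any linear subspace U of F_2^n containing u and all d_i, there exist pairwise disjoint pairs (a_1,b_1),...,(a_t,b_t) of elements of U with a_i - b_i = d_i for all i, whose union equals a union of t distinct cosets of the span of u inside U. -/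
theorem ugood_placement (n t : ℕ) (u : Fin n → ZMod 2) (hu : u ≠ 0)
    (D : Fin t → (Fin n → ZMod 2))
    (hsum : ∑ i, D i = t • u)
    (hsimple : ∀ j j' : ℕ, j < j' → j' < t →
      (∑ i ∈ Finset.univ.filter (fun i : Fin t => (i : ℕ) < j'), D i) -
        (∑ i ∈ Finset.univ.filter (fun i : Fin t => (i : ℕ) < j), D i) ∉
          Submodule.span (ZMod 2) {u})
    (U : Submodule (ZMod 2) (Fin n → ZMod 2)) (huU : u ∈ U) (hDU : ∀ i, D i ∈ U) :
    ∃ a b c : Fin t → (Fin n → ZMod 2),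
      (∀ i, a i ∈ U) ∧ (∀ i, b i ∈ U) ∧ (∀ i, c i ∈ U) ∧
      (∀ i, a i - b i = D i) ∧
      (∀ i j, i ≠ j → Disjoint ({a i, b i} : Set (Fin n → ZMod 2)) {a j, b j}) ∧
      Function.Injective (fun i => ({c i, c i + u} : Set (Fin n → ZMod 2))) ∧
      (⋃ i, ({a i, b i} : Set (Fin n → ZMod 2))) =
        ⋃ i, ({c i, c i + u} : Set (Fin n → ZMod 2)) := by
  classical
  let S : ℕ → (Fin n → ZMod 2) :=
    fun j => ∑ i ∈ Finset.univ.filter (fun i : Fin t => (i : ℕ) < j), D i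
  have hsimple' : ∀ j j' : ℕ, j < j' → j' < t →
      S j' - S j ∉ Submodule.span (ZMod 2) {u} :=
    fun j j' h h' => hsimple j j' h h'
  have hz2 : ∀ x : ZMod 2, x = 0 ∨ x = 1 := by decide
  have hspan : ∀ x : Fin n → ZMod 2,
      x ∈ Submodule.span (ZMod 2) {u} ↔ x = 0 ∨ x = u := by
    intro x
    rw [Submodule.mem_span_singleton]
    constructor
    · rintro ⟨c, rfl⟩
      rcases hz2 c with rfl | rfl
      · left; simp
      · right; simp
    · rintro (rfl | rfl)
      · exact ⟨0, by simp⟩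
      · exact ⟨1, by simp⟩
  have hSU : ∀ j, S j ∈ U := fun j => Submodule.sum_mem _ (fun i _ => hDU i)
  have hS0 : S 0 = 0 := by
    show (∑ i ∈ Finset.univ.filter (fun i : Fin t => (i : ℕ) < 0), D i) = 0
    simp
  have hSstep : ∀ i : Fin t, S ((i:ℕ)+1) = S (i:ℕ) + D i := by
    intro i
    show (∑ x ∈ Finset.univ.filter (fun x : Fin t => (x : ℕ) < (i:ℕ)+1), D x)
      = (∑ x ∈ Finset.univ.filter (fun x : Fin t => (x : ℕ) < (i:ℕ)), D x) + D i
    have hins : (Finset.univ.filter (fun x : Fin t => (x:ℕ) < (i:ℕ)+1))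
        = insert i (Finset.univ.filter (fun x : Fin t => (x:ℕ) < (i:ℕ))) := by
      ext x
      simp only [Finset.mem_filter, Finset.mem_univ, true_and, Finset.mem_insert,
        Fin.ext_iff]
      omega
    rw [hins, Finset.sum_insert (by simp), add_comm]
  have hSt : S t = t • u := by
    show (∑ x ∈ Finset.univ.filter (fun x : Fin t => (x : ℕ) < t), D x) = t • u
    have : (Finset.univ.filter (fun x : Fin t => (x:ℕ) < t)) = Finset.univ := by
      ext x; simp [x.isLt]
    rw [this, hsum]
  -- key distinctness lemma
  have key : ∀ (j j' : ℕ), j < t → j' < t → ∀ δ δ' : ZMod 2,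
      S j + δ • u = S j' + δ' • u → j = j' ∧ δ = δ' := by
    intro j j' hj hj' δ δ' h
    have hsub : ∀ (p q : ℕ) (γ γ' : ZMod 2), S p + γ • u = S q + γ' • u →
        S q - S p = (γ - γ') • u := by
      intro p q γ γ' hpq
      have h2 : S q + γ' • u - γ' • u = S p + γ • u - γ' • u := by rw [hpq]
      rw [add_sub_cancel_right] at h2
      rw [h2, sub_smul]; abel
    have hjj : j = j' := by
      by_contra hne
      rcases Nat.lt_or_ge j j' with hlt | hge
      · refine hsimple' j j' hlt hj' ((hspan _).mpr ?_)
        rw [hsub j j' δ δ' h]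
        rcases hz2 (δ - δ') with h0 | h0 <;> rw [h0]
        · left; rw [zero_smul]
        · right; rw [one_smul]
      · have hgt : j' < j := by omega
        refine hsimple' j' j hgt hj ((hspan _).mpr ?_)
        rw [hsub j' j δ' δ h.symm]
        rcases hz2 (δ' - δ) with h0 | h0 <;> rw [h0]
        · left; rw [zero_smul]
        · right; rw [one_smul]
    subst hjj
    refine ⟨rfl, ?_⟩
    have h2 : δ • u = δ' • u := add_left_cancel h
    rcases hz2 δ with rfl | rfl <;> rcases hz2 δ' with rfl | rfl
    · rfl
    · exfalso; rw [zero_smul, one_smul] at h2; exact hu h2.symm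
    · exfalso; rw [zero_smul, one_smul] at h2; exact hu h2
    · rfl
  -- the construction
  let a : Fin t → (Fin n → ZMod 2) := fun i => S ((i:ℕ)+1) + ((i:ℕ) : ZMod 2) • u
  let b : Fin t → (Fin n → ZMod 2) := fun i => S (i:ℕ) + ((i:ℕ) : ZMod 2) • u
  let c : Fin t → (Fin n → ZMod 2) := fun i => S (i:ℕ)
  have hlast : ∀ i : Fin t, (i:ℕ)+1 = t → a i = S 0 + (1 : ZMod 2) • u := by
    intro i hi
    show S ((i:ℕ)+1) + ((i:ℕ) : ZMod 2) • u = S 0 + (1 : ZMod 2) • u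
    have hSt' : S t = ((t : ℕ) : ZMod 2) • u := by
      rw [hSt]; exact (Nat.cast_smul_eq_nsmul _ _ _).symm
    rw [hi, hSt', hS0, zero_add, ← add_smul]
    congr 1
    have ht' : ((t:ℕ) : ZMod 2) = ((i:ℕ) : ZMod 2) + 1 := by
      calc ((t:ℕ) : ZMod 2) = (((i:ℕ)+1 : ℕ) : ZMod 2) := by rw [hi]
        _ = ((i:ℕ) : ZMod 2) + 1 := by push_cast; ring
    rw [ht']
    rcases hz2 (((i:ℕ) : ZMod 2)) with h | h <;> rw [h] <;> decide
  -- pairwise element inequalities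
  have hb_ne : ∀ i j : Fin t, (i:ℕ) ≠ (j:ℕ) → b i ≠ b j := by
    intro i j hij h
    exact hij (key (i:ℕ) (j:ℕ) i.isLt j.isLt _ _ h).1
  have hab_ne : ∀ i j : Fin t, a i ≠ b j := by
    intro i j h
    by_cases hi : (i:ℕ)+1 < t
    · obtain ⟨h1, h2⟩ := key ((i:ℕ)+1) (j:ℕ) hi j.isLt _ _ h
      rw [← h1] at h2
      have : (((i:ℕ)+1 : ℕ) : ZMod 2) = ((i:ℕ) : ZMod 2) + 1 := by push_cast; ring
      rw [this] at h2
      rcases hz2 (((i:ℕ) : ZMod 2)) with h0 | h0 <;> rw [h0] at h2 <;>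
        exact absurd h2 (by decide)
    · have hi' : (i:ℕ)+1 = t := by omega
      rw [hlast i hi'] at h
      obtain ⟨h1, h2⟩ := key 0 (j:ℕ) i.pos j.isLt _ _ h
      rw [← h1] at h2
      exact absurd h2 (by decide)
  have ha_ne : ∀ i j : Fin t, (i:ℕ) ≠ (j:ℕ) → a i ≠ a j := by
    intro i j hij h
    by_cases hi : (i:ℕ)+1 < t <;> by_cases hj : (j:ℕ)+1 < t
    · have := (key ((i:ℕ)+1) ((j:ℕ)+1) hi hj _ _ h).1
      omega
    · rw [hlast j (by omega)] at h
      have := (key ((i:ℕ)+1) 0 hi j.pos _ _ h).1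
      omega
    · rw [hlast i (by omega)] at h
      have := (key 0 ((j:ℕ)+1) i.pos hj _ _ h).1
      omega
    · omega
  refine ⟨a, b, c, ?_, ?_, ?_, ?_, ?_, ?_, ?_⟩
  · intro i; exact Submodule.add_mem _ (hSU _) (Submodule.smul_mem _ _ huU)
  · intro i; exact Submodule.add_mem _ (hSU _) (Submodule.smul_mem _ _ huU)
  · intro i; exact hSU _
  · intro i
    show S ((i:ℕ)+1) + ((i:ℕ) : ZMod 2) • u - (S (i:ℕ) + ((i:ℕ) : ZMod 2) • u) = D i
    rw [hSstep i]; abel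
  · intro i j hij
    have hijn : (i:ℕ) ≠ (j:ℕ) := fun h => hij (Fin.ext h)
    rw [Set.disjoint_iff_forall_ne]
    rintro x hx y hy
    simp only [Set.mem_insert_iff, Set.mem_singleton_iff] at hx hy
    rcases hx with rfl | rfl <;> rcases hy with rfl | rfl
    · exact ha_ne i j hijn
    · exact hab_ne i j
    · exact fun h => hab_ne j i h.symm
    · exact hb_ne i j hijn
  · intro i j h
    have h' : ({S (i:ℕ), S (i:ℕ) + u} : Set (Fin n → ZMod 2))
        = {S (j:ℕ), S (j:ℕ) + u} := h
    have hm : S (i:ℕ) ∈ ({S (j:ℕ), S (j:ℕ) + u} : Set (Fin n → ZMod 2)) := by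
      rw [← h']; exact Set.mem_insert _ _
    rcases hm with h1 | h1
    · have : S (i:ℕ) + (0 : ZMod 2) • u = S (j:ℕ) + (0 : ZMod 2) • u := by
        rw [zero_smul, add_zero, add_zero, h1]
      exact Fin.ext (key _ _ i.isLt j.isLt _ _ this).1
    · rw [Set.mem_singleton_iff] at h1
      have : S (i:ℕ) + (0 : ZMod 2) • u = S (j:ℕ) + (1 : ZMod 2) • u := by
        rw [zero_smul, add_zero, one_smul, h1]
      exact absurd (key _ _ i.isLt j.isLt _ _ this).2 (by decide)
  · ext x
    simp only [Set.mem_iUnion, Set.mem_insert_iff, Set.mem_singleton_iff]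
    constructor
    · rintro ⟨i, rfl | rfl⟩
      · by_cases hi : (i:ℕ)+1 < t
        · refine ⟨⟨(i:ℕ)+1, hi⟩, ?_⟩
          show S ((i:ℕ)+1) + ((i:ℕ) : ZMod 2) • u = S ((i:ℕ)+1)
            ∨ S ((i:ℕ)+1) + ((i:ℕ) : ZMod 2) • u = S ((i:ℕ)+1) + u
          rcases hz2 (((i:ℕ) : ZMod 2)) with h0 | h0 <;> rw [h0]
          · left; rw [zero_smul, add_zero]
          · right; rw [one_smul]
        · refine ⟨⟨0, i.pos⟩, Or.inr ?_⟩
          show a i = S 0 + u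
          rw [hlast i (by omega), one_smul]
      · refine ⟨i, ?_⟩
        show S (i:ℕ) + ((i:ℕ) : ZMod 2) • u = S (i:ℕ)
          ∨ S (i:ℕ) + ((i:ℕ) : ZMod 2) • u = S (i:ℕ) + u
        rcases hz2 (((i:ℕ) : ZMod 2)) with h0 | h0 <;> rw [h0]
        · left; rw [zero_smul, add_zero]
        · right; rw [one_smul]
    · rintro ⟨i, rfl | rfl⟩
      · rcases hz2 (((i:ℕ) : ZMod 2)) with h0 | h0
        · refine ⟨i, Or.inr ?_⟩
          show S (i:ℕ) = S (i:ℕ) + ((i:ℕ) : ZMod 2) • u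
          rw [h0, zero_smul, add_zero]
        · rcases Nat.eq_zero_or_pos (i:ℕ) with hi0 | hip
          · exfalso; rw [hi0] at h0; exact absurd h0 (by decide)
          · set k : ℕ := (i:ℕ) - 1 with hk
            have hk1 : (i:ℕ) = k + 1 := by omega
            have hεk : ((k : ℕ) : ZMod 2) = 0 := by
              rcases hz2 ((k : ℕ) : ZMod 2) with hh | hh
              · exact hh
              · exfalso
                have : ((i:ℕ) : ZMod 2) = 0 := by
                  rw [hk1]; push_cast; rw [hh]; decide
                rw [this] at h0; exact absurd h0 (by decide)
            refine ⟨⟨k, by omega⟩, Or.inl ?_⟩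
            show S (i:ℕ) = S (k+1) + ((k : ℕ) : ZMod 2) • u
            rw [← hk1, hεk, zero_smul, add_zero]
      · rcases hz2 (((i:ℕ) : ZMod 2)) with h0 | h0
        · rcases Nat.eq_zero_or_pos (i:ℕ) with hi0 | hip
          · refine ⟨⟨t-1, by omega⟩, Or.inl ?_⟩
            have hl := hlast ⟨t-1, by omega⟩ (by simp; omega)
            show S (i:ℕ) + u = a ⟨t-1, by omega⟩
            rw [hl, one_smul, hi0]
          · set k : ℕ := (i:ℕ) - 1 with hk
            have hk1 : (i:ℕ) = k + 1 := by omega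
            have hεk : ((k : ℕ) : ZMod 2) = 1 := by
              rcases hz2 ((k : ℕ) : ZMod 2) with hh | hh
              · exfalso
                have : ((i:ℕ) : ZMod 2) = 1 := by
                  rw [hk1]; push_cast; rw [hh]; decide
                rw [this] at h0; exact absurd h0 (by decide)
              · exact hh
            refine ⟨⟨k, by omega⟩, Or.inl ?_⟩
            show S (i:ℕ) + u = S (k+1) + ((k : ℕ) : ZMod 2) • u
            rw [← hk1, hεk, one_smul]
        · refine ⟨i, Or.inr ?_⟩
          show S (i:ℕ) + u = S (i:ℕ) + ((i:ℕ) : ZMod 2) • u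
          rw [h0, one_smul]
end

section
/- Let u be a nonzero vector in F_2^n, and let S be a finite multiset of vectors in F_2^n none of which is congruent to 0 mod u (i.e., no element equals 0 or u), such that the sum of S equals |S|·u. Then S can be partitioned into u-good multisets. -/
/-- A multiset `D` of vectors in `F_2^n` is `u`-good if its sum equals `|D| • u`
and its elements can be ordered so that the partial sums are pairwise distinct
modulo the span of `u`. -/
def UGood {n : ℕ} (u : Fin n → ZMod 2) (D : Multiset (Fin n → ZMod 2)) : Prop :=
  D.sum = Multiset.card D • u ∧
  ∃ l : List (Fin n → ZMod 2), (l : Multiset (Fin n → ZMod 2)) = D ∧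
    ∀ j j' : ℕ, j < j' → j' < l.length →
      (l.take j').sum - (l.take j).sum ∉ Submodule.span (ZMod 2) {u}

/-!
Replacing every element `x` by `x + u` turns the condition `D.sum = |D| • u` into `D.sum = 0`
and changes no partial sum modulo `u`; so it suffices to split a zero-sum multiset `S` with no
element in `{0, u}` into zero-sum pieces, each with an ordering whose partial sums are distinct
modulo `u`, and by induction it suffices to find one nonempty such piece inside `S`.

Let `B ≤ S` be minimal among nonempty multisets with sum in `{0, u}`. Every ordering of `B`
works, since a segment summing into `{0, u}` would be a smaller such multiset. If `B` sums to
`u`, pick `B' ≤ S - B` in the same way; if `B'` sums to `0` we are done, and if `S ≠ B + B'` the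
rest `S - B - B'` sums to `0` and we recurse. So let `S = B + B'`. If some `E ≤ B`, `F ≤ B'`
have `E.sum + F.sum ∈ {0, u}` but `E.sum ∉ {0, u}`, then `E + F` or `(B - E) + F` is a smaller
zero-sum multiset. Otherwise the ordering `b₁ … b_{p-1} c₁ … c_{q-1} b_p c_q` works: each
partial sum is a partial sum of `B` plus one of `B'`, and two of them can only agree modulo `u`
if both components do, which minimality of `B` and `B'` rules out.
-/

lemma Multiset.exists_eq_coe_append_singleton {α : Type*} {B : Multiset α} (hB : B ≠ 0) :
    ∃ (L : List α) (b : α), B = ↑(L ++ [b]) := by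
  rcases List.eq_nil_or_concat' B.toList with h | ⟨L, b, h⟩
  · exact absurd (Multiset.toList_eq_nil.mp h) hB
  · exact ⟨L, b, by rw [← h, Multiset.coe_toList]⟩

lemma Multiset.tsub_lt_self_of_le {α : Type*} [DecidableEq α] {S T : Multiset α} (h : T ≤ S)
    (hT : T ≠ 0) : S - T < S :=
  tsub_le_self.lt_of_ne fun h' => hT (by simpa [h'] using tsub_add_cancel_of_le h)

variable {V : Type*} [AddCommGroup V]

lemma Multiset.sum_tsub [DecidableEq V] {S T : Multiset V} (h : T ≤ S) :
    (S - T).sum = S.sum - T.sum := by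
  rw [eq_sub_iff_add_eq, ← Multiset.sum_add, tsub_add_cancel_of_le h]

lemma Multiset.sum_map_add_const (S : Multiset V) (u : V) :
    (S.map (· + u)).sum = S.sum + S.card • u := by
  simp [Multiset.sum_map_add]

lemma List.exists_le_sum_eq_sum_take_sub (l : List V) {i i' : ℕ} (h : i ≤ i')
    (h' : i' ≤ l.length) :
    ∃ E ≤ (l : Multiset V), E.card = i' - i ∧ E.sum = (l.take i').sum - (l.take i).sum := by
  refine ⟨((l.take i').drop i : List V),
    Multiset.coe_le.mpr ((List.drop_sublist _ _).trans (List.take_sublist _ _)).subperm,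
    by simp [h'], ?_⟩
  rw [eq_sub_iff_add_eq, Multiset.sum_coe, add_comm, ← List.sum_append]
  conv_rhs => rw [← List.take_append_drop i (l.take i'), List.take_take, min_eq_left h]

lemma List.sum_take_append_append_pair {L₁ L₂ : List V} {b c : V} {k : ℕ}
    (hk : k ≤ L₁.length + L₂.length + 1) :
    ((L₁ ++ L₂ ++ [b, c]).take k).sum =
      ((L₁ ++ [b]).take (if k = L₁.length + L₂.length + 1 then L₁.length + 1
        else min k L₁.length)).sum + ((L₂ ++ [c]).take (min (k - L₁.length) L₂.length)).sum := by
  split_ifs with hlast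
  · subst hlast
    have hq : min (L₁.length + L₂.length + 1 - L₁.length) L₂.length = L₂.length := by omega
    rw [show L₁ ++ L₂ ++ [b, c] = L₁ ++ L₂ ++ [b] ++ [c] by simp,
      List.take_left' (by simp [add_assoc]), hq, List.take_left' rfl,
      List.take_of_length_le (l := L₁ ++ [b]) (by simp)]
    simp only [List.sum_append, List.sum_singleton]
    abel
  · rw [List.append_assoc, List.take_append, List.take_append_of_le_length (by omega),
      List.take_append_of_le_length (min_le_right _ _), ← List.take_eq_take_min,
      List.take_append_of_le_length (min_le_right _ _), ← List.take_eq_take_min, List.sum_append]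

section Submodule

variable {R : Type*} [Ring R] [Module R V] (K : Submodule R V)

def HasDistinctPartialSums (D : Multiset V) : Prop :=
  ∃ l : List V, (l : Multiset V) = D ∧
    ∀ j j', j < j' → j' < l.length → (l.take j').sum - (l.take j).sum ∉ K

def IsZeroSumMod (C : Multiset V) : Prop :=
  C ≠ 0 ∧ C.sum ∈ K

variable {K}

lemma HasDistinctPartialSums.map_add_const {D : Multiset V} (hD : HasDistinctPartialSums K D)
    {u : V} (hu : u ∈ K) : HasDistinctPartialSums K (D.map (· + u)) := by
  obtain ⟨l, rfl, hl⟩ := hD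
  refine ⟨l.map (· + u), rfl, fun j j' hj hj' hK => hl j j' hj (by simpa using hj') ?_⟩
  rw [← List.map_take, ← List.map_take, List.sum_map_add, List.sum_map_add,
    List.map_id', List.map_id'] at hK
  have hconst (m : List V) : (m.map fun _ => u).sum ∈ K := by
    simpa using K.nsmul_mem hu m.length
  convert add_mem (sub_mem hK (hconst (l.take j'))) (hconst (l.take j)) using 1
  abel

lemma eq_or_eq_zero_and_eq_length_of_sum_take_sub_mem {l : List V}
    (hl : Minimal (IsZeroSumMod K) (l : Multiset V)) {i i' : ℕ} (h : i ≤ i')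
    (h' : i' ≤ l.length) (hK : (l.take i').sum - (l.take i).sum ∈ K) :
    i = i' ∨ i = 0 ∧ i' = l.length := by
  obtain ⟨E, hE, hcard, hsum⟩ := l.exists_le_sum_eq_sum_take_sub h h'
  by_contra hne
  have hE0 : E ≠ 0 := by
    rintro rfl
    simp only [Multiset.card_zero] at hcard
    omega
  have := Multiset.card_le_card (hl.2 ⟨hE0, hsum ▸ hK⟩ hE)
  simp only [Multiset.coe_card] at this
  omega

lemma Minimal.hasDistinctPartialSums {D : Multiset V} (hD : Minimal (IsZeroSumMod K) D) :
    HasDistinctPartialSums K D := by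
  refine ⟨D.toList, D.coe_toList, fun j j' hj hj' hK => ?_⟩
  rw [← D.coe_toList] at hD
  have := eq_or_eq_zero_and_eq_length_of_sum_take_sub_mem hD hj.le hj'.le hK
  omega

lemma hasDistinctPartialSums_append_of_independent {L₁ L₂ : List V} {b c : V}
    (hB : Minimal (IsZeroSumMod K) ↑(L₁ ++ [b])) (hB' : Minimal (IsZeroSumMod K) ↑(L₂ ++ [c]))
    (hb : b ∉ K) (hc : c ∉ K)
    (hind : ∀ E ≤ (↑(L₁ ++ [b]) : Multiset V), ∀ F ≤ (↑(L₂ ++ [c]) : Multiset V),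
      E.sum + F.sum ∈ K → E.sum ∈ K) :
    HasDistinctPartialSums K ↑(L₁ ++ [b] ++ (L₂ ++ [c])) := by
  have hp : 0 < L₁.length := List.length_pos_iff.mpr <| by
    rintro rfl
    exact hb (by simpa using hB.1.2)
  have hq : 0 < L₂.length := List.length_pos_iff.mpr <| by
    rintro rfl
    exact hc (by simpa using hB'.1.2)
  refine ⟨L₁ ++ L₂ ++ [b, c], by simpa using List.perm_middle.append_left L₁,
    fun j j' hj hj' hK => ?_⟩
  simp only [List.length_append, List.length_cons, List.length_nil] at hj'
  rw [List.sum_take_append_append_pair (by omega),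
    List.sum_take_append_append_pair (by omega)] at hK
  generalize hi_def : (if j = L₁.length + L₂.length + 1 then L₁.length + 1
    else min j L₁.length) = i at hK
  generalize hi'_def : (if j' = L₁.length + L₂.length + 1 then L₁.length + 1
    else min j' L₁.length) = i' at hK
  have hi : i ≤ i' := by split_ifs at hi_def hi'_def <;> omega
  have hi' : i' ≤ (L₁ ++ [b]).length := by
    simp only [List.length_append, List.length_singleton]
    split_ifs at hi'_def <;> omega
  obtain ⟨E, hE, -, hEsum⟩ := (L₁ ++ [b]).exists_le_sum_eq_sum_take_sub hi hi'
  obtain ⟨F, hF, -, hFsum⟩ := (L₂ ++ [c]).exists_le_sum_eq_sum_take_sub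
    (i := min (j - L₁.length) L₂.length) (i' := min (j' - L₁.length) L₂.length) (by omega)
    (by simp)
  have hEF : E.sum + F.sum ∈ K := by
    rw [hEsum, hFsum]
    convert hK using 1
    abel
  have hEK := hind E hE F hF hEF
  have hFK : F.sum ∈ K := by simpa using sub_mem hEF hEK
  rw [hEsum] at hEK
  rw [hFsum] at hFK
  have := eq_or_eq_zero_and_eq_length_of_sum_take_sub_mem hB hi hi' hEK
  have := eq_or_eq_zero_and_eq_length_of_sum_take_sub_mem hB' (by omega) (by simp) hFK
  simp only [List.length_append, List.length_cons, List.length_nil] at *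
  split_ifs at hi_def hi'_def <;> omega

end Submodule

section ZModTwo

variable [Module (ZMod 2) V] {u : V}

lemma ZModModule.mem_span_singleton_iff {x : V} : x ∈ (ZMod 2) ∙ u ↔ x = 0 ∨ x = u := by
  refine ⟨fun h => ?_, ?_⟩
  · obtain ⟨a, rfl⟩ := Submodule.mem_span_singleton.mp h
    rcases (by decide : ∀ a : ZMod 2, a = 0 ∨ a = 1) a with rfl | rfl <;> simp
  · rintro (rfl | rfl)
    exacts [zero_mem _, Submodule.mem_span_singleton_self _]

lemma exists_lt_add_sum_eq_zero {B B' E F : Multiset V} (hB : B.sum = u) (hE : E ≤ B)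
    (hF : F ≤ B') (hEF : E.sum + F.sum ∈ (ZMod 2) ∙ u) (hEu : E.sum ∉ (ZMod 2) ∙ u) :
    ∃ T < B + B', T ≠ 0 ∧ T.sum = 0 := by
  classical
  have hE0 : E ≠ 0 := by
    rintro rfl
    exact hEu (zero_mem _)
  have hEB : E < B := hE.lt_of_ne <| by
    rintro rfl
    exact hEu (by rw [hB]; exact Submodule.mem_span_singleton_self u)
  rcases ZModModule.mem_span_singleton_iff.mp hEF with hEF | hEF
  · exact ⟨E + F, add_lt_add_of_lt_of_le hEB hF, by simp [hE0], by rw [Multiset.sum_add, hEF]⟩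
  · have hBE : B - E ≠ 0 := by simpa [tsub_eq_zero_iff_le] using hEB.not_ge
    refine ⟨B - E + F, add_lt_add_of_lt_of_le (Multiset.tsub_lt_self_of_le hE hE0) hF,
      by simp [hBE], ?_⟩
    calc (B - E + F).sum = ((B - E).sum + E.sum) + (E.sum + F.sum) := by
          rw [Multiset.sum_add, ZModModule.add_add_add_cancel]
      _ = u + u := by rw [← Multiset.sum_add, tsub_add_cancel_of_le hE, hB, hEF]
      _ = 0 := ZModModule.add_self u

lemma hasDistinctPartialSums_add_or_exists_lt {B B' : Multiset V}
    (hB : Minimal (IsZeroSumMod ((ZMod 2) ∙ u)) B)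
    (hB' : Minimal (IsZeroSumMod ((ZMod 2) ∙ u)) B')
    (hBu : B.sum = u) (hK : ∀ x ∈ B + B', x ∉ (ZMod 2) ∙ u) :
    HasDistinctPartialSums ((ZMod 2) ∙ u) (B + B') ∨ ∃ T < B + B', T ≠ 0 ∧ T.sum = 0 := by
  by_cases hind : ∀ E ≤ B, ∀ F ≤ B', E.sum + F.sum ∈ (ZMod 2) ∙ u → E.sum ∈ (ZMod 2) ∙ u
  · left
    obtain ⟨L₁, b, rfl⟩ := Multiset.exists_eq_coe_append_singleton hB.1.1
    obtain ⟨L₂, c, rfl⟩ := Multiset.exists_eq_coe_append_singleton hB'.1.1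
    exact hasDistinctPartialSums_append_of_independent hB hB' (hK b (by simp)) (hK c (by simp))
      hind
  · right
    push Not at hind
    obtain ⟨E, hE, F, hF, hEF, hEu⟩ := hind
    exact exists_lt_add_sum_eq_zero hBu hE hF hEF hEu

theorem exists_le_sum_eq_zero_hasDistinctPartialSums (S : Multiset V) (hS : S ≠ 0)
    (hK : ∀ x ∈ S, x ∉ (ZMod 2) ∙ u) (hsum : S.sum = 0) :
    ∃ D ≤ S, D ≠ 0 ∧ D.sum = 0 ∧ HasDistinctPartialSums ((ZMod 2) ∙ u) D := by
  classical
  induction S using Multiset.strongInductionOn with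
  | ih S ih =>
  have recurse : ∀ T < S, T ≠ 0 → T.sum = 0 →
      ∃ D ≤ S, D ≠ 0 ∧ D.sum = 0 ∧ HasDistinctPartialSums ((ZMod 2) ∙ u) D := by
    intro T hTS hT hTsum
    obtain ⟨D, hDT, hD⟩ := ih T hTS hT (fun x hx => hK x (Multiset.mem_of_le hTS.le hx)) hTsum
    exact ⟨D, hDT.trans hTS.le, hD⟩
  obtain ⟨B, hBS, hB⟩ := exists_minimal_le_of_wellFoundedLT (IsZeroSumMod ((ZMod 2) ∙ u)) S
    ⟨hS, hsum ▸ zero_mem _⟩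
  by_cases hB0 : B.sum = 0
  · exact ⟨B, hBS, hB.1.1, hB0, hB.hasDistinctPartialSums⟩
  have hBu : B.sum = u := (ZModModule.mem_span_singleton_iff.mp hB.1.2).resolve_left hB0
  have hSBu : (S - B).sum = u := by
    rw [Multiset.sum_tsub hBS, hsum, hBu, zero_sub, ZModModule.neg_eq_self]
  obtain ⟨B', hB'SB, hB'⟩ := exists_minimal_le_of_wellFoundedLT (IsZeroSumMod ((ZMod 2) ∙ u))
    (S - B) ⟨fun h => hB0 (by rw [hBu, ← hSBu, h, Multiset.sum_zero]),
      by rw [hSBu]; exact Submodule.mem_span_singleton_self u⟩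
  by_cases hB'0 : B'.sum = 0
  · exact ⟨B', hB'SB.trans tsub_le_self, hB'.1.1, hB'0, hB'.hasDistinctPartialSums⟩
  have hB'u : B'.sum = u :=
    (ZModModule.mem_span_singleton_iff.mp hB'.1.2).resolve_left hB'0
  by_cases hR : S - B - B' = 0
  · have hS : B + B' = S := by
      rw [← (tsub_eq_zero_iff_le.mp hR).antisymm hB'SB, add_tsub_cancel_of_le hBS]
    subst hS
    rcases hasDistinctPartialSums_add_or_exists_lt hB hB' hBu hK with h | ⟨T, hT, hT0, hTsum⟩
    · exact ⟨B + B', le_rfl, hS, hsum, h⟩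
    · exact recurse T hT hT0 hTsum
  · refine recurse _ (tsub_le_self.trans_lt (Multiset.tsub_lt_self_of_le hBS hB.1.1)) hR ?_
    rw [Multiset.sum_tsub hB'SB, hSBu, hB'u, sub_self]

theorem exists_partition_sum_eq_zero_hasDistinctPartialSums (S : Multiset V)
    (hK : ∀ x ∈ S, x ∉ (ZMod 2) ∙ u) (hsum : S.sum = 0) :
    ∃ P : Multiset (Multiset V), P.sum = S ∧
      ∀ D ∈ P, D.sum = 0 ∧ HasDistinctPartialSums ((ZMod 2) ∙ u) D := by
  classical
  induction S using Multiset.strongInductionOn with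
  | ih S ih =>
  rcases eq_or_ne S 0 with rfl | hS
  · exact ⟨0, rfl, by simp⟩
  obtain ⟨D, hDS, hD0, hDsum, hD⟩ := exists_le_sum_eq_zero_hasDistinctPartialSums S hS hK hsum
  obtain ⟨P, hPS, hP⟩ := ih (S - D) (Multiset.tsub_lt_self_of_le hDS hD0)
    (fun x hx => hK x (Multiset.mem_of_le tsub_le_self hx))
    (by rw [Multiset.sum_tsub hDS, hsum, hDsum, sub_zero])
  refine ⟨D ::ₘ P, by rw [Multiset.sum_cons, hPS, add_tsub_cancel_of_le hDS], ?_⟩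
  simpa using ⟨⟨hDsum, hD⟩, hP⟩

end ZModTwo

theorem partition_into_ugood_general (n : ℕ) (u : Fin n → ZMod 2)
    (S : Multiset (Fin n → ZMod 2))
    (h0 : ∀ x ∈ S, x ∉ Submodule.span (ZMod 2) {u})
    (hsum : S.sum = Multiset.card S • u) :
    ∃ P : Multiset (Multiset (Fin n → ZMod 2)),
      P.sum = S ∧ ∀ D ∈ P, UGood u D := by
  have hu := Submodule.mem_span_singleton_self (R := ZMod 2) u
  obtain ⟨P, hPS, hP⟩ := exists_partition_sum_eq_zero_hasDistinctPartialSums (S.map (· + u))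
    (by simpa using fun x hx hxu => h0 x hx (by simpa using sub_mem hxu hu))
    (by rw [Multiset.sum_map_add_const, hsum, ZModModule.add_self])
  refine ⟨P.map (Multiset.map (· + u)), ?_, ?_⟩
  · have := map_multiset_sum (Multiset.mapAddMonoidHom (· + u)) P
    rw [Multiset.coe_mapAddMonoidHom] at this
    rw [← this, hPS, Multiset.map_map]
    simp [add_assoc, ZModModule.add_self]
  · simp only [Multiset.mem_map]
    rintro _ ⟨D, hD, rfl⟩
    obtain ⟨hDsum, hDsep⟩ := hP D hD
    exact ⟨by rw [Multiset.sum_map_add_const, hDsum, zero_add, Multiset.card_map],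
      hDsep.map_add_const hu⟩

theorem partition_into_ugood (n : ℕ) (u : Fin n → ZMod 2) (hu : u ≠ 0)
    (S : Multiset (Fin n → ZMod 2))
    (h0 : ∀ x ∈ S, x ∉ Submodule.span (ZMod 2) {u})
    (hsum : S.sum = Multiset.card S • u) :
    ∃ P : Multiset (Multiset (Fin n → ZMod 2)),
      P.sum = S ∧ ∀ D ∈ P, UGood u D :=
  partition_into_ugood_general n u S h0 hsum
end

section
/- Let u be a nonzero vector in F_2^n and let D = (d_1,...,d_t) be a u-good sequence. Then every subset S ⊆ F_2^n that is a union of cosets of span(u), has size less than 2^n / (binom(t,2)+1), and is u-blocking for D leads to a contradiction; i.e., any u-blocking set for D has size at least 2^n / (binom(t,2)+1). -/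
lemma ugbr_addself {n : ℕ} (v : Fin n → ZMod 2) : v + v = 0 := by
  funext i
  have h : ∀ c : ZMod 2, c + c = 0 := by decide
  exact h (v i)

lemma ugbr_sub {n : ℕ} (v w : Fin n → ZMod 2) : v - w = v + w := by
  rw [sub_eq_add_neg, neg_eq_of_add_eq_zero_left (ugbr_addself w)]

def ugbrS {n t : ℕ} (D : Fin t → (Fin n → ZMod 2)) (σ : Equiv.Perm (Fin t)) (j : ℕ) :
    Fin n → ZMod 2 :=
  ∑ i ∈ Finset.univ.filter (fun i : Fin t => (i : ℕ) < j), D (σ i)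

lemma ugbrS_zero {n t : ℕ} (D : Fin t → (Fin n → ZMod 2)) (σ : Equiv.Perm (Fin t)) :
    ugbrS D σ 0 = 0 := by
  simp [ugbrS]

lemma ugbrS_succ {n t : ℕ} (D : Fin t → (Fin n → ZMod 2)) (σ : Equiv.Perm (Fin t)) (k : Fin t) :
    ugbrS D σ ((k : ℕ) + 1) = ugbrS D σ k + D (σ k) := by
  unfold ugbrS
  have h : Finset.univ.filter (fun i : Fin t => (i : ℕ) < (k : ℕ) + 1)
      = insert k (Finset.univ.filter (fun i : Fin t => (i : ℕ) < (k : ℕ))) := by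
    ext i
    simp only [Finset.mem_filter, Finset.mem_univ, true_and, Finset.mem_insert]
    constructor
    · intro hi
      rcases Nat.lt_succ_iff_lt_or_eq.mp hi with h | h
      · exact Or.inr h
      · exact Or.inl (Fin.ext h)
    · rintro (rfl | h)
      · omega
      · omega
  rw [h, Finset.sum_insert (by simp)]
  ring

lemma ugbrS_top {n t : ℕ} (D : Fin t → (Fin n → ZMod 2)) (σ : Equiv.Perm (Fin t))
    (u : Fin n → ZMod 2) (hsum : ∑ i, D i = t • u) :
    ugbrS D σ t = t • u := by
  unfold ugbrS
  have h : Finset.univ.filter (fun i : Fin t => (i : ℕ) < t) = Finset.univ := by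
    ext i; simp [i.isLt]
  rw [h, Equiv.sum_comp σ D, hsum]

def ugbrE {n : ℕ} (u : Fin n → ZMod 2) (m : ℕ) : Fin n → ZMod 2 :=
  if m % 2 = 0 then 0 else u

lemma ugbrE_zero {n : ℕ} (u : Fin n → ZMod 2) : ugbrE u 0 = 0 := rfl

lemma ugbrE_mem {n : ℕ} (u : Fin n → ZMod 2) (m : ℕ) :
    ugbrE u m ∈ Submodule.span (ZMod 2) {u} := by
  unfold ugbrE
  split_ifs
  · exact zero_mem _
  · exact Submodule.mem_span_singleton_self u

lemma ugbrE_succ {n : ℕ} (u : Fin n → ZMod 2) (m : ℕ) : ugbrE u m + u = ugbrE u (m + 1) := by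
  unfold ugbrE
  rcases Nat.mod_two_eq_zero_or_one m with h | h
  · have h' : (m + 1) % 2 = 1 := by omega
    simp [h, h']
  · have h' : (m + 1) % 2 = 0 := by omega
    simp [h, h', ugbr_addself u]

lemma ugbrE_ne {n : ℕ} (u : Fin n → ZMod 2) (hu : u ≠ 0) (m : ℕ) :
    ugbrE u m ≠ ugbrE u (m + 1) := by
  intro h
  apply hu
  have := ugbrE_succ u m
  rw [← h] at this
  exact (add_eq_left).mp this

lemma ugbrE_pred {n : ℕ} (u : Fin n → ZMod 2) (m : ℕ) : ugbrE u (m + 1) + u = ugbrE u m := by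
  rw [← ugbrE_succ, add_assoc, ugbr_addself, add_zero]

lemma ugbrS_top_key {n t : ℕ} (D : Fin t → (Fin n → ZMod 2)) (σ : Equiv.Perm (Fin t))
    (u : Fin n → ZMod 2) (hsum : ∑ i, D i = t • u) (ht : 0 < t) :
    ugbrS D σ t + ugbrE u (t - 1) = u := by
  rw [ugbrS_top D σ u hsum]
  unfold ugbrE
  rcases Nat.even_or_odd t with ⟨m, hm⟩ | ⟨m, hm⟩
  · have h' : (t - 1) % 2 = 1 := by omega
    rw [if_neg (by omega)]
    have : t • u = 0 := by
      rw [hm, add_nsmul, ugbr_addself]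
    rw [this, zero_add]
  · have h' : (t - 1) % 2 = 0 := by omega
    rw [if_pos h', add_zero, hm]
    rw [add_nsmul, one_nsmul, two_mul, add_nsmul, ugbr_addself ((m : ℕ) • u), zero_add]

theorem ugood_blocking_ratio (n t : ℕ) (u : Fin n → ZMod 2) (hu : u ≠ 0)
    (D : Fin t → (Fin n → ZMod 2))
    (hsum : ∑ i, D i = t • u)
    (hsimple : ∃ σ : Equiv.Perm (Fin t), ∀ j j' : ℕ, j < j' → j' < t →
      (∑ i ∈ Finset.univ.filter (fun i : Fin t => (i : ℕ) < j'), D (σ i)) -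
        (∑ i ∈ Finset.univ.filter (fun i : Fin t => (i : ℕ) < j), D (σ i)) ∉
          Submodule.span (ZMod 2) {u})
    (S : Finset (Fin n → ZMod 2))
    (hScosets : ∀ x ∈ S, x + u ∈ S)
    (hblock : ¬ ∃ a b : Fin t → (Fin n → ZMod 2),
      (∀ i, a i ∉ S) ∧ (∀ i, b i ∉ S) ∧ (∀ i, a i - b i = D i) ∧
      (∀ i j, i ≠ j →
        Disjoint ({a i, b i} : Set (Fin n → ZMod 2)) {a j, b j}) ∧
      (∀ x ∈ (⋃ i, ({a i, b i} : Set (Fin n → ZMod 2))),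
        x + u ∈ ⋃ i, ({a i, b i} : Set (Fin n → ZMod 2)))) :
    ((2 ^ n : ℚ) / (t.choose 2 + 1)) ≤ S.card := by
  classical
  obtain ⟨σ, hσ⟩ := hsimple
  have hσ' : ∀ j j' : ℕ, j < j' → j' < t →
      ugbrS D σ j' - ugbrS D σ j ∉ Submodule.span (ZMod 2) {u} := hσ
  have hmemU : ∀ w ∈ Submodule.span (ZMod 2) {u}, w = 0 ∨ w = u := by
    intro w hw
    obtain ⟨c, rfl⟩ := Submodule.mem_span_singleton.mp hw
    have hc : c = 0 ∨ c = 1 := by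
      have h2 : ∀ c : ZMod 2, c = 0 ∨ c = 1 := by decide
      exact h2 c
    rcases hc with rfl | rfl
    · left; simp
    · right; simp
  have hSclosed : ∀ y, y ∉ S → ∀ w ∈ Submodule.span (ZMod 2) {u}, y + w ∉ S := by
    intro y hy w hw
    rcases hmemU w hw with rfl | rfl
    · simpa using hy
    · intro hc
      apply hy
      have h2 := hScosets _ hc
      rwa [add_assoc, ugbr_addself, add_zero] at h2
  have hdist : ∀ p q, p < t → q < t → p ≠ q →
      ugbrS D σ p - ugbrS D σ q ∉ Submodule.span (ZMod 2) {u} := by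
    intro p q hp hq hne hmem
    rcases lt_or_gt_of_ne hne with h | h
    · refine hσ' p q h hq ?_
      rwa [ugbr_sub, add_comm, ← ugbr_sub] at hmem
    · exact hσ' q p h hp hmem
  have hmain : 2 ^ n ≤ (t.choose 2 + 1) * S.card := by
    rcases Nat.eq_zero_or_pos t with rfl | ht
    · exact absurd ⟨fun i => i.elim0, fun i => i.elim0, fun i => i.elim0, fun i => i.elim0,
        fun i => i.elim0, fun i _ _ => i.elim0, fun x hx => by
          rw [Set.mem_iUnion] at hx
          exact hx.choose.elim0⟩ hblock
    · -- t > 0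
      have hstu : ugbrS D σ t ∈ Submodule.span (ZMod 2) {u} := by
        rw [ugbrS_top D σ u hsum]
        exact Submodule.mem_span_singleton.mpr ⟨(t : ZMod 2), Nat.cast_smul_eq_nsmul (ZMod 2) t u⟩
      have hcover : ∀ x : Fin n → ZMod 2, ∃ j < t, x + ugbrS D σ j ∈ S := by
        intro x
        by_contra hxc
        push_neg at hxc
        have hnotS : ∀ p ≤ t, ∀ w ∈ Submodule.span (ZMod 2) {u},
            x + ugbrS D σ p + w ∉ S := by
          intro p hp w hw
          rcases eq_or_lt_of_le hp with rfl | hlt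
          · have h0 : x + ugbrS D σ 0 ∉ S := hxc 0 ht
            have h2 := hSclosed _ h0 _ (add_mem hstu hw)
            intro hc
            apply h2
            rw [ugbrS_zero, add_zero, ← add_assoc]
            exact hc
          · exact hSclosed _ (hxc p hlt) _ hw
        have hkey : ∀ p q p' q' : ℕ, p' < t → q' < t → p' ≠ q' →
            ugbrS D σ p - ugbrS D σ p' ∈ Submodule.span (ZMod 2) {u} →
            ugbrS D σ q - ugbrS D σ q' ∈ Submodule.span (ZMod 2) {u} →
            ∀ wp wq : Fin n → ZMod 2, wp ∈ Submodule.span (ZMod 2) {u} →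
            wq ∈ Submodule.span (ZMod 2) {u} →
            x + ugbrS D σ p + wp ≠ x + ugbrS D σ q + wq := by
          intro p q p' q' hp' hq' hne hpm hqm wp wq hwp hwq heq
          apply hdist p' q' hp' hq' hne
          have h1 : ugbrS D σ p' - ugbrS D σ q' =
              (wq - wp) + (ugbrS D σ q - ugbrS D σ q') - (ugbrS D σ p - ugbrS D σ p') := by
            linear_combination heq
          rw [h1]
          exact sub_mem (add_mem (sub_mem hwq hwp) hqm) hpm
        have hpt : ∀ (k k' : Fin t) (δ δ' : ℕ), δ ≤ 1 → δ' ≤ 1 →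
            ¬((k : ℕ) = (k' : ℕ) ∧ δ = δ') →
            x + ugbrS D σ ((k : ℕ) + δ) + ugbrE u (k : ℕ) ≠
              x + ugbrS D σ ((k' : ℕ) + δ') + ugbrE u (k' : ℕ) := by
          intro k k' δ δ' hδ hδ' hne
          have hk := k.isLt
          have hk' := k'.isLt
          rcases Nat.lt_or_ge ((k : ℕ) + δ) t with h1 | h1
          · rcases Nat.lt_or_ge ((k' : ℕ) + δ') t with h2 | h2
            · by_cases heq : (k : ℕ) + δ = (k' : ℕ) + δ'
              · have hkk : (k : ℕ) ≠ (k' : ℕ) := fun h => hne ⟨h, by omega⟩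
                rcases Nat.lt_or_ge (k : ℕ) (k' : ℕ) with hlt | hge
                · have hδ1 : δ = 1 ∧ δ' = 0 ∧ (k' : ℕ) = (k : ℕ) + 1 := by omega
                  obtain ⟨rfl, rfl, hkE⟩ := hδ1
                  rw [hkE]
                  intro hE
                  apply ugbrE_ne u hu (k : ℕ)
                  have h3 : x + ugbrS D σ ((k : ℕ) + 1) + ugbrE u (k : ℕ) =
                      x + ugbrS D σ ((k : ℕ) + 1) + ugbrE u ((k : ℕ) + 1) := by
                    simpa using hE
                  exact add_left_cancel h3
                · have hδ1 : δ = 0 ∧ δ' = 1 ∧ (k : ℕ) = (k' : ℕ) + 1 := by omega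
                  obtain ⟨rfl, rfl, hkE⟩ := hδ1
                  rw [hkE]
                  intro hE
                  apply ugbrE_ne u hu (k' : ℕ)
                  have h3 : x + ugbrS D σ ((k' : ℕ) + 1) + ugbrE u (k' : ℕ) =
                      x + ugbrS D σ ((k' : ℕ) + 1) + ugbrE u ((k' : ℕ) + 1) := by
                    simpa using hE.symm
                  exact add_left_cancel h3
              · exact hkey _ _ _ _ h1 h2 heq (by rw [sub_self]; exact zero_mem _)
                  (by rw [sub_self]; exact zero_mem _) _ _ (ugbrE_mem u _) (ugbrE_mem u _)
            · have h2' : (k' : ℕ) + δ' = t := by omega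
              have hd1 : δ' = 1 ∧ (k' : ℕ) = t - 1 := by omega
              by_cases h0 : (k : ℕ) + δ = 0
              · have hd0 : δ = 0 ∧ (k : ℕ) = 0 := by omega
                rw [h0, hd0.2, hd1.1, hd1.2, ugbrS_zero, ugbrE_zero, add_zero, add_zero]
                have ht1 : t - 1 + 1 = t := by omega
                rw [ht1, add_assoc, ugbrS_top_key D σ u hsum ht]
                intro hE
                exact hu (add_eq_left.mp hE.symm)
              · refine hkey _ _ ((k : ℕ) + δ) 0 h1 ht h0
                  (by rw [sub_self]; exact zero_mem _) ?_ _ _ (ugbrE_mem u _) (ugbrE_mem u _)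
                rw [h2', ugbrS_zero, sub_zero]
                exact hstu
          · have h1' : (k : ℕ) + δ = t := by omega
            have hd1 : δ = 1 ∧ (k : ℕ) = t - 1 := by omega
            rcases Nat.lt_or_ge ((k' : ℕ) + δ') t with h2 | h2
            · by_cases h0 : (k' : ℕ) + δ' = 0
              · have hd0 : δ' = 0 ∧ (k' : ℕ) = 0 := by omega
                rw [h0, hd0.2, hd1.1, hd1.2, ugbrS_zero, ugbrE_zero, add_zero, add_zero]
                have ht1 : t - 1 + 1 = t := by omega
                rw [ht1, add_assoc, ugbrS_top_key D σ u hsum ht]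
                intro hE
                exact hu (add_eq_left.mp hE)
              · refine hkey _ _ 0 ((k' : ℕ) + δ') ht h2 (Ne.symm h0) ?_
                  (by rw [sub_self]; exact zero_mem _) _ _ (ugbrE_mem u _) (ugbrE_mem u _)
                rw [h1', ugbrS_zero, sub_zero]
                exact hstu
            · exact (hne ⟨by omega, by omega⟩).elim
        apply hblock
        refine ⟨fun i => x + ugbrS D σ ((σ.symm i : ℕ) + 1) + ugbrE u (σ.symm i : ℕ),
          fun i => x + ugbrS D σ (σ.symm i : ℕ) + ugbrE u (σ.symm i : ℕ), ?_, ?_, ?_, ?_, ?_⟩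
        · intro i
          exact hnotS _ (Nat.succ_le_of_lt (σ.symm i).isLt) _ (ugbrE_mem u _)
        · intro i
          exact hnotS _ (le_of_lt (σ.symm i).isLt) _ (ugbrE_mem u _)
        · intro i
          have h := ugbrS_succ D σ (σ.symm i)
          rw [Equiv.apply_symm_apply] at h
          linear_combination h
        · intro i j hij
          have hk : (σ.symm i : ℕ) ≠ (σ.symm j : ℕ) :=
            fun h => hij (σ.symm.injective (Fin.ext h))
          rw [Set.disjoint_left]
          intro z hz hz'
          simp only [Set.mem_insert_iff, Set.mem_singleton_iff] at hz hz'
          rcases hz with rfl | rfl <;> rcases hz' with h | h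
          · exact hpt _ _ 1 1 le_rfl le_rfl (fun hh => hk hh.1) h
          · exact hpt (σ.symm i) (σ.symm j) 1 0 le_rfl (Nat.zero_le 1)
              (fun hh => one_ne_zero hh.2) (by simpa using h)
          · exact hpt (σ.symm j) (σ.symm i) 1 0 le_rfl (Nat.zero_le 1)
              (fun hh => one_ne_zero hh.2) (by simpa using h.symm)
          · exact hpt (σ.symm i) (σ.symm j) 0 0 (Nat.zero_le 1) (Nat.zero_le 1)
              (fun hh => hk hh.1) (by simpa using h)
        · intro y hy
          rw [Set.mem_iUnion] at hy
          obtain ⟨i, hi⟩ := hy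
          rw [Set.mem_iUnion]
          simp only [Set.mem_insert_iff, Set.mem_singleton_iff] at hi
          rcases hi with rfl | rfl
          · -- y = a i
            by_cases hkt : (σ.symm i : ℕ) + 1 = t
            · refine ⟨σ ⟨0, ht⟩, ?_⟩
              rw [Set.mem_insert_iff, Set.mem_singleton_iff]
              right
              simp only [Equiv.symm_apply_apply, Fin.val_mk]
              have hkv : (σ.symm i : ℕ) = t - 1 := by omega
              rw [hkt, hkv]
              linear_combination ugbrS_top_key D σ u hsum ht + ugbr_addself u -
                ugbrS_zero D σ - ugbrE_zero u
            · refine ⟨σ ⟨(σ.symm i : ℕ) + 1,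
                lt_of_le_of_ne (Nat.succ_le_of_lt (σ.symm i).isLt) hkt⟩, ?_⟩
              rw [Set.mem_insert_iff, Set.mem_singleton_iff]
              right
              simp only [Equiv.symm_apply_apply, Fin.val_mk]
              linear_combination ugbrE_succ u (σ.symm i : ℕ)
          · -- y = b i
            by_cases hk0 : (σ.symm i : ℕ) = 0
            · refine ⟨σ ⟨t - 1, by omega⟩, ?_⟩
              rw [Set.mem_insert_iff, Set.mem_singleton_iff]
              left
              simp only [Equiv.symm_apply_apply, Fin.val_mk]
              have ht1 : t - 1 + 1 = t := by omega
              rw [hk0, ht1]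
              linear_combination ugbrS_zero D σ + ugbrE_zero u -
                ugbrS_top_key D σ u hsum ht
            · refine ⟨σ ⟨(σ.symm i : ℕ) - 1, by omega⟩, ?_⟩
              rw [Set.mem_insert_iff, Set.mem_singleton_iff]
              left
              simp only [Equiv.symm_apply_apply, Fin.val_mk]
              have ht1 : (σ.symm i : ℕ) - 1 + 1 = (σ.symm i : ℕ) := by omega
              rw [ht1]
              have h2 := ugbrE_pred u ((σ.symm i : ℕ) - 1)
              rw [ht1] at h2
              linear_combination h2
      have hsubset : (Finset.univ : Finset (Fin n → ZMod 2)) ⊆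
          (Finset.range t).biUnion (fun j => S.image (fun y => y + ugbrS D σ j)) := by
        intro x _
        obtain ⟨j, hj, hjS⟩ := hcover x
        refine Finset.mem_biUnion.mpr ⟨j, Finset.mem_range.mpr hj, ?_⟩
        refine Finset.mem_image.mpr ⟨x + ugbrS D σ j, hjS, ?_⟩
        rw [add_assoc, ugbr_addself, add_zero]
      have h1 : 2 ^ n ≤ t * S.card := by
        have hcards := Finset.card_le_card hsubset
        rw [Finset.card_univ] at hcards
        have hcu : Fintype.card (Fin n → ZMod 2) = 2 ^ n := by
          rw [Fintype.card_fun, ZMod.card, Fintype.card_fin]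
        rw [hcu] at hcards
        calc 2 ^ n ≤ ((Finset.range t).biUnion
              (fun j => S.image (fun y => y + ugbrS D σ j))).card := hcards
          _ ≤ ∑ j ∈ Finset.range t, (S.image (fun y => y + ugbrS D σ j)).card :=
              Finset.card_biUnion_le
          _ ≤ ∑ j ∈ Finset.range t, S.card :=
              Finset.sum_le_sum (fun j _ => Finset.card_image_le)
          _ = t * S.card := by rw [Finset.sum_const, Finset.card_range, smul_eq_mul]
      have ht2 : t ≤ t.choose 2 + 1 := by
        rcases Nat.lt_or_ge t 2 with h | h
        · omega
        · have h3 : t - 1 ≤ t * (t - 1) / 2 := by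
            rw [Nat.le_div_iff_mul_le (by norm_num : 0 < 2)]
            calc (t - 1) * 2 = 2 * (t - 1) := by ring
              _ ≤ t * (t - 1) := Nat.mul_le_mul_right _ h
          rw [Nat.choose_two_right]
          omega
      calc 2 ^ n ≤ t * S.card := h1
        _ ≤ (t.choose 2 + 1) * S.card := Nat.mul_le_mul_right _ ht2
  have hpos : (0 : ℚ) < (t.choose 2 + 1 : ℚ) := by positivity
  rw [div_le_iff₀ hpos]
  have := hmain
  have hq : ((2 : ℚ) ^ n) ≤ ((t.choose 2 + 1 : ℕ) : ℚ) * (S.card : ℚ) := by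
    exact_mod_cast hmain
  calc ((2:ℚ)^n) ≤ ((t.choose 2 + 1 : ℕ) : ℚ) * (S.card : ℚ) := hq
    _ = (S.card : ℚ) * ((t.choose 2 : ℕ) + 1 : ℚ) := by push_cast; ring
end
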